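/- Suppose e_{u₀} f_{v₀} = f_{v₀} e_{u₀} in F_θ⁺ with |u₀| = k and |v₀| = l. Writing u₀ = i_{k-1,0}⋯i_{0,0} and v₀ = j_{0,l-1}⋯j_{0,0}, the commutation relations determine unique letters i_{s,t} ∈ {1,…,m} and j_{s,t} ∈ {1,…,n} indexed by (s,t) ∈ C_k × C_l (cyclic groups) satisfying f_{j_{s+1,t}} e_{i_{s,t}} = e_{i_{s,t+1}} f_{j_{s,t}} for all s ∈ C_k, t ∈ C_l. -/

import Mathlib

inductive TwoGraphGen (I J : Type) : Type
  | e : I → TwoGraphGen I J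
  | f : J → TwoGraphGen I J

def twoGraphRel {I J : Type} (θ : Equiv.Perm (I × J)) :
    FreeMonoid (TwoGraphGen I J) → FreeMonoid (TwoGraphGen I J) → Prop :=
  fun a b => ∃ i j,
    a = FreeMonoid.of (TwoGraphGen.e i) * FreeMonoid.of (TwoGraphGen.f j) ∧
    b = FreeMonoid.of (TwoGraphGen.f (θ (i, j)).2) * FreeMonoid.of (TwoGraphGen.e (θ (i, j)).1)

def FTheta {I J : Type} (θ : Equiv.Perm (I × J)) : Type :=
  (conGen (twoGraphRel θ)).Quotient

instance {I J : Type} (θ : Equiv.Perm (I × J)) : Monoid (FTheta θ) :=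
  inferInstanceAs (Monoid (conGen (twoGraphRel θ)).Quotient)

def FTheta.E {I J : Type} (θ : Equiv.Perm (I × J)) (i : I) : FTheta θ :=
  (conGen (twoGraphRel θ)).mk' (FreeMonoid.of (TwoGraphGen.e i))

def FTheta.F {I J : Type} (θ : Equiv.Perm (I × J)) (j : J) : FTheta θ :=
  (conGen (twoGraphRel θ)).mk' (FreeMonoid.of (TwoGraphGen.f j))

def FTheta.eWord {I J : Type} (θ : Equiv.Perm (I × J)) (u : List I) : FTheta θ :=
  (u.map (FTheta.E θ)).prod

def FTheta.fWord {I J : Type} (θ : Equiv.Perm (I × J)) (v : List J) : FTheta θ :=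
  (v.map (FTheta.F θ)).prod

/-!
In `F_θ⁺` every element has a unique normal form `e_u f_v`: the monoid acts on pairs of words,
a letter `e_i` by prefixing `i`, a letter `f_j` by pulling `j` through the `e`-word with `θ⁻¹`.
Pulling the letters of `v₀` one at a time through `e_{u₀}` rewrites `f_{v₀} e_{u₀}` as
`e_{u_l} f_{j'_{l-1}} ⋯ f_{j'_0}`; comparing with `e_{u₀} f_{v₀}` shows that every letter of `v₀`
comes out unchanged and that `u_l = u₀`. The intermediate words `u_t` and the intermediate
letters of each pull therefore close up into a grid on `C_k × C_l`. Conversely the relation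
`f_{j'} e_i = e_{i'} f_j` forces `(i', j) = θ⁻¹ (i, j')`, so such a grid is filled in from its
first column and first row, column after column and downwards in each column.
-/

open Function

theorem ZMod.succ_induction {n : ℕ} [NeZero n] {motive : ZMod n → Prop} (zero : motive 0)
    (succ : ∀ a, motive a → motive (a + 1)) (a : ZMod n) : motive a := by
  obtain ⟨m, rfl⟩ := ZMod.natCast_zmod_surjective a
  induction m with
  | zero => simpa using zero
  | succ m ih => simpa using succ _ ih

theorem ZMod.pred_induction {n : ℕ} [NeZero n] {motive : ZMod n → Prop} (zero : motive 0)
    (pred : ∀ a, motive (a + 1) → motive a) (a : ZMod n) : motive a := by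
  rw [← neg_neg a]
  induction -a using ZMod.succ_induction with
  | zero => simpa using zero
  | succ b ih => exact pred _ (by rwa [neg_add, neg_add_cancel_right])

theorem ZMod.val_add_one_eq_mod {n : ℕ} [NeZero n] (a : ZMod n) :
    (a + 1).val = (a.val + 1) % n := by
  conv_lhs => rw [← ZMod.natCast_zmod_val a]
  rw [← Nat.cast_succ, ZMod.val_natCast]

namespace TwoGraph

variable {I J : Type*} (τ : I × J → I × J)

/- A word `R : List I` stands for the `e`-word read from right to left, so that `R[s]` is the
letter `i_s` of the paper. With `τ = θ⁻¹`, `f_j e_i = e_{i'} f_{j'}` where `(i', j') = τ (i, j)`;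
pulling `f_j` through the word gives `f_j e_R = e_{pullWord τ j R} f_{pullLetter τ j R}`. -/
def pullLetter (j : J) (R : List I) : J :=
  R.foldr (fun i j' => (τ (i, j')).2) j

def pullWord (j : J) : List I → List I
  | [] => []
  | i :: R => (τ (i, pullLetter τ j R)).1 :: pullWord j R

variable {τ}

@[simp]
theorem pullLetter_nil (j : J) : pullLetter τ j [] = j := rfl

@[simp]
theorem pullLetter_cons (j : J) (i : I) (R : List I) :
    pullLetter τ j (i :: R) = (τ (i, pullLetter τ j R)).2 := rfl

@[simp]
theorem pullWord_nil (j : J) : pullWord τ j [] = [] := rfl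

@[simp]
theorem pullWord_cons (j : J) (i : I) (R : List I) :
    pullWord τ j (i :: R) = (τ (i, pullLetter τ j R)).1 :: pullWord τ j R := rfl

@[simp]
theorem length_pullWord (j : J) (R : List I) : (pullWord τ j R).length = R.length := by
  induction R <;> simp [*]

theorem pullLetter_append_singleton (j : J) (R : List I) (i : I) :
    pullLetter τ j (R ++ [i]) = pullLetter τ (τ (i, j)).2 R := by
  simp [pullLetter]

theorem pullWord_append_singleton (j : J) (R : List I) (i : I) :
    pullWord τ j (R ++ [i]) = pullWord τ (τ (i, j)).2 R ++ [(τ (i, j)).1] := by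
  induction R <;> simp [*, pullLetter_append_singleton]

theorem apply_getElem_pullLetter_drop (j : J) (R : List I) (s : ℕ) (hs : s < R.length) :
    τ (R[s], pullLetter τ j (R.drop (s + 1))) =
      ((pullWord τ j R)[s]'(by simpa using hs), pullLetter τ j (R.drop s)) := by
  induction R generalizing s with
  | nil => simp at hs
  | cons i R ih =>
    cases s with
    | zero => rfl
    | succ s => exact ih s (by simpa using hs)

theorem pullLetter_drop_mod {j : J} {R : List I} {k r : ℕ} (hR : R.length = k)
    (hj : pullLetter τ j R = j) (hr : r ≤ k) :
    pullLetter τ j (R.drop (r % k)) = pullLetter τ j (R.drop r) := by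
  rcases hr.lt_or_eq with hr | rfl
  · rw [Nat.mod_eq_of_lt hr]
  · simp [← hR, hj]

variable (τ) {l : ℕ}

def column (w : ZMod l → J) (R : List I) : ℕ → List I
  | 0 => R
  | t + 1 => pullWord τ (w t) (column w R t)

variable {τ}

@[simp]
theorem column_zero (w : ZMod l → J) (R : List I) : column τ w R 0 = R := rfl

@[simp]
theorem column_succ (w : ZMod l → J) (R : List I) (t : ℕ) :
    column τ w R (t + 1) = pullWord τ (w t) (column τ w R t) := rfl

@[simp]
theorem length_column (w : ZMod l → J) (R : List I) (t : ℕ) :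
    (column τ w R t).length = R.length := by
  induction t <;> simp [*]

@[simp]
theorem column_nil (w : ZMod l → J) (t : ℕ) : column τ w ([] : List I) t = [] := by
  induction t <;> simp [*]

theorem column_periodic {w : ZMod l → J} {R : List I} (h : column τ w R l = R) :
    Periodic (column τ w R) l := by
  intro t
  induction t with
  | zero => simpa using h
  | succ t ih => simp [Nat.add_right_comm t 1 l, ih]

theorem pullLetter_column_val [NeZero l] {w : ZMod l → J} {R : List I}
    (hout : ∀ t < l, pullLetter τ (w t) (column τ w R t) = w t) (t : ZMod l) :
    pullLetter τ (w t) (column τ w R t.val) = w t := by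
  simpa using hout t.val t.val_lt

variable (τ) {k : ℕ}

/-- `p.1 s t = i_{s,t}` and `p.2 s t = j_{s,t}`. -/
def IsTorusGrid (p : (ZMod k → ZMod l → I) × (ZMod k → ZMod l → J)) : Prop :=
  ∀ s t, τ (p.1 s t, p.2 (s + 1) t) = (p.1 s (t + 1), p.2 s t)

def torusGrid [NeZero k] (w : ZMod l → J) (R : List I) (hR : R.length = k) :
    (ZMod k → ZMod l → I) × (ZMod k → ZMod l → J) :=
  (fun s t => (column τ w R t.val)[s.val]'(by simpa [hR] using s.val_lt),
    fun s t => pullLetter τ (w t) ((column τ w R t.val).drop s.val))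

variable {τ}

theorem IsTorusGrid.eq [NeZero k] [NeZero l]
    {p q : (ZMod k → ZMod l → I) × (ZMod k → ZMod l → J)}
    (hp : IsTorusGrid τ p) (hq : IsTorusGrid τ q)
    (h₁ : ∀ s, q.1 s 0 = p.1 s 0) (h₂ : ∀ t, q.2 0 t = p.2 0 t) : q = p := by
  have step : ∀ s t, q.1 s t = p.1 s t → q.2 (s + 1) t = p.2 (s + 1) t →
      q.1 s (t + 1) = p.1 s (t + 1) ∧ q.2 s t = p.2 s t := by
    intro s t h h'
    have := hq s t
    rwa [h, h', hp s t, Prod.mk.injEq, eq_comm, eq_comm (a := p.2 s t)] at this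
  have down : ∀ t, (∀ s, q.1 s t = p.1 s t) → ∀ s, q.2 s t = p.2 s t := by
    intro t h s
    induction s using ZMod.pred_induction with
    | zero => exact h₂ t
    | pred s ih => exact (step s t (h s) ih).2
  have across : ∀ t s, q.1 s t = p.1 s t := by
    intro t
    induction t using ZMod.succ_induction with
    | zero => exact h₁
    | succ t ih => exact fun s => (step s t (ih s) (down t ih (s + 1))).1
  ext s t
  · exact across t s
  · exact down t (across t) s

variable [NeZero k] {w : ZMod l → J} {R : List I}

theorem torusGrid_fst_zero (hR : R.length = k) (s : ZMod k) :
    (torusGrid τ w R hR).1 s 0 = R[s.val]'(by simpa [hR] using s.val_lt) := by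
  simp [torusGrid]

variable [NeZero l]

theorem torusGrid_snd_zero (hR : R.length = k)
    (hout : ∀ t < l, pullLetter τ (w t) (column τ w R t) = w t) (t : ZMod l) :
    (torusGrid τ w R hR).2 0 t = w t := by
  simpa [torusGrid] using pullLetter_column_val hout t

theorem isTorusGrid_torusGrid (hR : R.length = k) (hcol : column τ w R l = R)
    (hout : ∀ t < l, pullLetter τ (w t) (column τ w R t) = w t) :
    IsTorusGrid τ (torusGrid τ w R hR) := by
  intro s t
  have hs : s.val + 1 ≤ k := s.val_lt
  simp only [torusGrid, ZMod.val_add_one_eq_mod, (column_periodic hcol).map_mod_nat,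
    pullLetter_drop_mod ((length_column w R _).trans hR) (pullLetter_column_val hout t) hs]
  simpa using apply_getElem_pullLetter_drop (w t) (column τ w R t.val) s.val _

end TwoGraph

namespace FTheta

open TwoGraph

variable {I J : Type} (θ : Equiv.Perm (I × J))

def genAction : TwoGraphGen I J → Function.End (List I × List J)
  | .e i => fun x => (x.1 ++ [i], x.2)
  | .f j => fun x => (pullWord θ.symm j x.1, pullLetter θ.symm j x.1 :: x.2)

/-- The action of `F_θ⁺` on normal forms: `x = (R, V)` stands for `e_{R.reverse} f_V`. -/
def nfAction : FTheta θ →* Function.End (List I × List J) :=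
  (conGen (twoGraphRel θ)).lift (FreeMonoid.lift (genAction θ)) <| Con.conGen_le.mpr <| by
    rintro _ _ ⟨i, j, rfl, rfl⟩
    simp only [Con.ker_rel, map_mul, FreeMonoid.lift_eval_of]
    funext x
    change genAction θ (.e i) (genAction θ (.f j) x) = genAction θ (.f _) (genAction θ (.e _) x)
    simp [genAction, pullWord_append_singleton, pullLetter_append_singleton]

variable {θ}

theorem nfAction_mul_apply (a b : FTheta θ) (x : List I × List J) :
    nfAction θ (a * b) x = nfAction θ a (nfAction θ b x) := by
  rw [map_mul]; rfl

theorem nfAction_one (x : List I × List J) : nfAction θ 1 x = x := by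
  rw [map_one]; rfl

theorem nfAction_E (i : I) (x : List I × List J) : nfAction θ (E θ i) x = (x.1 ++ [i], x.2) :=
  rfl

theorem nfAction_F (j : J) (x : List I × List J) :
    nfAction θ (F θ j) x = (pullWord θ.symm j x.1, pullLetter θ.symm j x.1 :: x.2) :=
  rfl

theorem nfAction_eWord (u : List I) (x : List I × List J) :
    nfAction θ (eWord θ u) x = (x.1 ++ u.reverse, x.2) := by
  induction u with
  | nil => simp [eWord, nfAction_one]
  | cons i u ih =>
    simp only [eWord, List.map_cons, List.prod_cons] at ih ⊢
    simp [nfAction_mul_apply, ih, nfAction_E]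

theorem nfAction_fWord {l : ℕ} (w : ZMod l → J) (R : List I) (V : List J) (T : ℕ) :
    nfAction θ (fWord θ ((List.range T).map fun t : ℕ => w t).reverse) (R, V) =
      (column θ.symm w R T,
        ((List.range T).map fun t : ℕ => pullLetter θ.symm (w t) (column θ.symm w R t)).reverse ++
          V) := by
  induction T with
  | zero => simp [fWord, nfAction_one]
  | succ T ih =>
    have hF : fWord θ ((List.range (T + 1)).map fun t : ℕ => w t).reverse =
        F θ (w T) * fWord θ ((List.range T).map fun t : ℕ => w t).reverse := by
      simp [fWord, List.range_succ]
    rw [hF, nfAction_mul_apply, ih, nfAction_F]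
    simp [List.range_succ]

theorem E_mul_F (i : I) (j : J) : E θ i * F θ j = F θ (θ (i, j)).2 * E θ (θ (i, j)).1 :=
  (Con.eq _).mpr (ConGen.Rel.of _ _ ⟨i, j, rfl, rfl⟩)

theorem F_mul_E_eq_iff {i i' : I} {j j' : J} :
    F θ j' * E θ i = E θ i' * F θ j ↔ θ.symm (i, j') = (i', j) := by
  constructor
  · intro h
    have h' := congrArg (fun a => nfAction θ a ([], [])) h
    exact Prod.ext_iff.mpr (by simpa [nfAction_mul_apply, nfAction_E, nfAction_F] using h')
  · intro h
    rw [E_mul_F, ← h, Equiv.apply_symm_apply]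

theorem column_of_commute {l : ℕ} {u : List I} {w : ZMod l → J} {T : ℕ}
    (h : eWord θ u * fWord θ ((List.range T).map fun t : ℕ => w t).reverse =
      fWord θ ((List.range T).map fun t : ℕ => w t).reverse * eWord θ u) :
    column θ.symm w u.reverse T = u.reverse ∧
      ∀ t < T, pullLetter θ.symm (w t) (column θ.symm w u.reverse t) = w t := by
  have h' := congrArg (fun a => nfAction θ a ([], [])) h
  simp only [nfAction_mul_apply, nfAction_eWord, nfAction_fWord] at h'
  simp only [column_nil, pullLetter_nil, List.nil_append, List.append_nil,
    Prod.mk.injEq, List.reverse_inj, List.map_inj_left, List.mem_range] at h'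
  exact ⟨h'.1.symm, fun t ht => (h'.2 t ht).symm⟩

end FTheta

open FTheta TwoGraph

/-- If e_{u₀} f_{v₀} = f_{v₀} e_{u₀} with |u₀| = k, |v₀| = l
(u₀ = i_{k-1,0}⋯i_{0,0}, v₀ = j_{0,l-1}⋯j_{0,0}), then the commutation relations
determine unique letters i_{s,t}, j_{s,t} indexed by C_k × C_l with
f_{j_{s+1,t}} e_{i_{s,t}} = e_{i_{s,t+1}} f_{j_{s,t}} for all s ∈ C_k, t ∈ C_l. -/
theorem ring_by_ring_letters {m n : ℕ} (θ : Equiv.Perm (Fin m × Fin n)) (k l : ℕ)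
    (hk : 0 < k) (hl : 0 < l)
    (u₀ : List (Fin m)) (v₀ : List (Fin n)) (hu : u₀.length = k) (hv : v₀.length = l)
    (hcomm : FTheta.eWord θ u₀ * FTheta.fWord θ v₀ =
      FTheta.fWord θ v₀ * FTheta.eWord θ u₀) :
    ∃! p : (ZMod k → ZMod l → Fin m) × (ZMod k → ZMod l → Fin n),
      (∀ (s : ℕ) (hs : s < k), p.1 (s : ZMod k) 0 = u₀.get ⟨k - 1 - s, by omega⟩) ∧
      (∀ (t : ℕ) (ht : t < l), p.2 0 (t : ZMod l) = v₀.get ⟨l - 1 - t, by omega⟩) ∧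
      (∀ (s : ZMod k) (t : ZMod l),
        FTheta.F θ (p.2 (s + 1) t) * FTheta.E θ (p.1 s t) =
        FTheta.E θ (p.1 s (t + 1)) * FTheta.F θ (p.2 s t)) := by
  have : NeZero k := ⟨hk.ne'⟩
  have : NeZero l := ⟨hl.ne'⟩
  have hR : u₀.reverse.length = k := by simpa using hu
  let w : ZMod l → Fin n := fun t => v₀.reverse[t.val]'(by simpa [hv] using t.val_lt)
  have hv₀ : v₀ = ((List.range l).map fun t : ℕ => w t).reverse := by
    refine List.reverse_eq_iff.mp (List.ext_getElem (by simp [hv]) fun t ht _ => ?_)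
    have ht' : t < l := by simpa [hv] using ht
    simp [w, Nat.mod_eq_of_lt ht']
  rw [hv₀] at hcomm
  obtain ⟨hcol, hout⟩ := column_of_commute hcomm
  set p := torusGrid θ.symm w u₀.reverse hR
  have hgrid : IsTorusGrid θ.symm p := isTorusGrid_torusGrid hR hcol hout
  have hp₁ : ∀ (s : ℕ) (hs : s < k), p.1 s 0 = u₀.get ⟨k - 1 - s, by omega⟩ := by
    intro s hs
    simp [p, torusGrid_fst_zero, List.getElem_reverse, hu, ZMod.val_natCast_of_lt hs]
  have hp₂ : ∀ (t : ℕ) (ht : t < l), p.2 0 t = v₀.get ⟨l - 1 - t, by omega⟩ := by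
    intro t ht
    rw [torusGrid_snd_zero hR hout]
    simp [w, List.getElem_reverse, hv, ZMod.val_natCast_of_lt ht]
  refine ⟨p, ⟨hp₁, hp₂, fun s t => F_mul_E_eq_iff.2 (hgrid s t)⟩, ?_⟩
  rintro q ⟨hq₁, hq₂, hq₃⟩
  refine hgrid.eq (fun s t => F_mul_E_eq_iff.1 (hq₃ s t)) (fun s => ?_) (fun t => ?_)
  · simpa using (hq₁ s.val s.val_lt).trans (hp₁ s.val s.val_lt).symm
  · simpa using (hq₂ t.val t.val_lt).trans (hp₂ t.val t.val_lt).symm
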